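/- Secret extraction correctness: Let Q be prime and P = 2Q+1 prime, g an element of order Q in the multiplicative group of Z_P. Let p(x) be a degree-t polynomial over Z_Q with constant term a_0, let x_0,...,x_{t-1}, x_i be t+1 distinct nonzero points of Z_Q, f(x_k) = p(x_k), and let lambda_k (for k = 0..t-1) and lambda_i be the Lagrangian coefficients at 0 for this node set. Then for any r in Z_Q and any tau in the subgroup generated by g, tau * g^{r a_0} divided by ( prod_{k=0}^{t-1} (g^{r f(x_k)})^{lambda_k} * (g^r)^{f(x_i) lambda_i} ) equals tau. -/

import Mathlib

/-!
Since `g` has order `Q`, the exponent map `n ↦ g ^ n` factors through `ZMod Q`, so the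
denominator collapses to `g ^ (r * ∑ k, f(x k) * λ k)`. As `p` has degree at most `t` and the
`t + 1` nodes are distinct, Lagrange interpolation at `0` gives `∑ k, f(x k) * λ k = a₀`; the
denominator is therefore `g ^ (r * a₀)`, and it cancels.
-/

open Finset Polynomial

/-- The Lagrangian coefficient at 0 of node `x k` with respect to the node family `x`. -/
def lagCoeff {Q n : ℕ} [Fact Q.Prime] (x : Fin n → ZMod Q) (k : Fin n) : ZMod Q :=
  ∏ j ∈ Finset.univ.erase k, x j / (x j - x k)

theorem pow_eq_pow_of_natCast_eq {G : Type*} [Monoid G] {g : G} {n : ℕ} (hg : g ^ n = 1)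
    {k m : ℕ} (h : (k : ZMod n) = m) : g ^ k = g ^ m :=
  pow_eq_pow_of_modEq ((ZMod.natCast_eq_natCast_iff k m n).mp h) hg

theorem Lagrange.eval_basis_zero {Q n : ℕ} [Fact Q.Prime] (x : Fin n → ZMod Q) (k : Fin n) :
    (Lagrange.basis univ x k).eval 0 = lagCoeff x k := by
  rw [Lagrange.basis, eval_prod, lagCoeff]
  refine prod_congr rfl fun j hj => ?_
  rw [Lagrange.basisDivisor, eval_mul, eval_C, eval_sub, eval_X, eval_C, ← neg_sub (x j) (x k),
    inv_neg, zero_sub, div_eq_mul_inv]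
  ring

theorem coeff_zero_eq_sum_eval_mul_lagCoeff {Q n : ℕ} [Fact Q.Prime] (p : (ZMod Q)[X])
    (hdeg : p.degree < n) (x : Fin n → ZMod Q) (hx : Function.Injective x) :
    p.coeff 0 = ∑ k, p.eval (x k) * lagCoeff x k := by
  have hdeg' : p.degree < #(univ : Finset (Fin n)) := by simpa using hdeg
  rw [coeff_zero_eq_eval_zero]
  conv_lhs => rw [Lagrange.eq_interpolate hx.injOn hdeg', Lagrange.interpolate_apply]
  rw [eval_finsetSum]
  simp only [eval_mul, eval_C, Lagrange.eval_basis_zero x]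

theorem stmt_1_general (Q P t : ℕ) [Fact Q.Prime]
    (g : (ZMod P)ˣ) (hg : orderOf g = Q)
    (p : Polynomial (ZMod Q)) (hdeg : p.degree ≤ (t : ℕ))
    (x : Fin (t + 1) → ZMod Q) (hinj : Function.Injective x)
    (r : ZMod Q) (τ : (ZMod P)ˣ) :
    τ * g ^ (r * p.coeff 0).val /
        ((∏ k : Fin t, (g ^ (r * p.eval (x k.castSucc)).val) ^ (lagCoeff x k.castSucc).val) *
          (g ^ r.val) ^ (p.eval (x (Fin.last t)) * lagCoeff x (Fin.last t)).val) = τ := by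
  have hdeg' : p.degree < ↑(t + 1) := hdeg.trans_lt (by exact_mod_cast t.lt_succ_self)
  have hden : (∏ k : Fin t, (g ^ (r * p.eval (x k.castSucc)).val) ^ (lagCoeff x k.castSucc).val) *
      (g ^ r.val) ^ (p.eval (x (Fin.last t)) * lagCoeff x (Fin.last t)).val =
      g ^ (r * p.coeff 0).val := by
    simp only [← pow_mul, prod_pow_eq_pow_sum, ← pow_add]
    refine pow_eq_pow_of_natCast_eq (hg ▸ pow_orderOf_eq_one g) ?_
    push_cast [ZMod.natCast_val, ZMod.cast_id]
    rw [coeff_zero_eq_sum_eval_mul_lagCoeff p hdeg' x hinj, mul_sum, Fin.sum_univ_castSucc]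
    simp only [mul_assoc]
  rw [hden, mul_div_cancel_right]

/-- secret extraction correctness. -/
theorem stmt_1 (Q P t : ℕ) [Fact Q.Prime] (hP : P.Prime) (hPQ : P = 2 * Q + 1)
    (g : (ZMod P)ˣ) (hg : orderOf g = Q)
    (p : Polynomial (ZMod Q)) (hdeg : p.degree ≤ (t : ℕ))
    (x : Fin (t + 1) → ZMod Q) (hinj : Function.Injective x) (hnz : ∀ k, x k ≠ 0)
    (r : ZMod Q) (τ : (ZMod P)ˣ) (hτ : τ ∈ Subgroup.zpowers g) :
    τ * g ^ (r * p.coeff 0).val /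
        ((∏ k : Fin t, (g ^ (r * p.eval (x k.castSucc)).val) ^ (lagCoeff x k.castSucc).val) *
          (g ^ r.val) ^ (p.eval (x (Fin.last t)) * lagCoeff x (Fin.last t)).val) = τ :=
  stmt_1_general Q P t g hg p hdeg x hinj r τ
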